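/- Suppose I and I' are Gotzmann homogeneous ideals of S = K[x_1,…,x_n], generated in degrees d and d' respectively with d ≥ d', and μ(I) = μ(I'). Then H_I(T) = T^{d−d'} H_{I'}(T); equivalently H(I, d+δ) = H(I', d'+δ) for all δ ≥ 0; and consequently hdepth_1(I) = hdepth_1(I'). -/

import Mathlib

noncomputable section

open MvPolynomial

/-- The total degree of an exponent vector. -/
def edeg {n : ℕ} (a : Fin n →₀ ℕ) : ℕ := ∑ i, a i

/-- An exponent vector is squarefree if every exponent is at most 1. -/
def IsSqfree {n : ℕ} (a : Fin n →₀ ℕ) : Prop := ∀ i, a i ≤ 1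

/-- The set of exponent vectors of monomials belonging to the ideal `I`. -/
def expSet {K : Type} [Field K] {n : ℕ} (I : Ideal (MvPolynomial (Fin n) K)) :
    Set (Fin n →₀ ℕ) := {a | (monomial a (1 : K)) ∈ I}

/-- `I` is generated by monomials `x^a` with `a` satisfying the predicate `P`. -/
def GenBy {K : Type} [Field K] {n : ℕ} (I : Ideal (MvPolynomial (Fin n) K))
    (P : (Fin n →₀ ℕ) → Prop) : Prop :=
  ∃ G : Set (Fin n →₀ ℕ), (∀ a ∈ G, P a) ∧
    I = Ideal.span ((fun a => (monomial a (1 : K))) '' G)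

/-- `I` is a monomial ideal. -/
def IsMonomialIdeal {K : Type} [Field K] {n : ℕ} (I : Ideal (MvPolynomial (Fin n) K)) : Prop :=
  GenBy I fun _ => True

/-- `I` is a squarefree monomial ideal. -/
def IsSqfreeMonomialIdeal {K : Type} [Field K] {n : ℕ}
    (I : Ideal (MvPolynomial (Fin n) K)) : Prop := GenBy I IsSqfree

/-- `x^a >_lex x^b` in the lexicographic order with `x_1 > x_2 > ⋯ > x_n`. -/
def lexGT {n : ℕ} (a b : Fin n →₀ ℕ) : Prop :=
  ∃ i : Fin n, (∀ j : Fin n, j < i → a j = b j) ∧ b i < a i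

/-- `I` is a lexsegment ideal. -/
def IsLexsegment {K : Type} [Field K] {n : ℕ} (I : Ideal (MvPolynomial (Fin n) K)) : Prop :=
  IsMonomialIdeal I ∧ ∀ a b : Fin n →₀ ℕ, (monomial a (1 : K)) ∈ I → edeg b = edeg a →
    lexGT b a → (monomial b (1 : K)) ∈ I

/-- `I` is a squarefree lexsegment ideal. -/
def IsSqfreeLexsegment {K : Type} [Field K] {n : ℕ}
    (I : Ideal (MvPolynomial (Fin n) K)) : Prop :=
  IsSqfreeMonomialIdeal I ∧ ∀ a b : Fin n →₀ ℕ, IsSqfree a → IsSqfree b →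
    (monomial a (1 : K)) ∈ I → edeg b = edeg a → lexGT b a → (monomial b (1 : K)) ∈ I

/-- The minimal number of generators of an ideal. -/
def mu {K : Type} [Field K] {n : ℕ} (I : Ideal (MvPolynomial (Fin n) K)) : ℕ :=
  sInf {m | ∃ G : Finset (MvPolynomial (Fin n) K), G.card = m ∧ I = Ideal.span (G : Set _)}

/-- `ξ_k = ∑_{j=1}^k C(2j-1, j)`. -/
def xi (k : ℕ) : ℕ := ∑ j ∈ Finset.Icc 1 k, (2 * j - 1).choose j

/-- The Hilbert function of `I`: the `K`-dimension of the degree-`j` component of `I`. -/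
def hilb {K : Type} [Field K] {n : ℕ} (I : Ideal (MvPolynomial (Fin n) K)) (j : ℕ) : ℕ :=
  Module.finrank K ↥((Submodule.restrictScalars K I) ⊓ homogeneousSubmodule (Fin n) K j)

/-- The Hilbert function of `I` extended to all integer degrees. -/
def hilbZ {K : Type} [Field K] {n : ℕ} (I : Ideal (MvPolynomial (Fin n) K)) (j : ℤ) : ℕ :=
  if 0 ≤ j then hilb I j.toNat else 0

/-- The Hilbert function of a standard graded polynomial ring in `d` variables,
at degree `t ∈ ℤ`. -/
def polyHilb (d : ℕ) (t : ℤ) : ℕ :=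
  if t < 0 then 0 else if d = 0 then (if t = 0 then 1 else 0) else (t.toNat + (d - 1)).choose (d - 1)

/-- A (standard graded) Hilbert decomposition of `I` all of whose retracts are polynomial
rings in at least `k` variables: `I ≅ ⊕ᵢ Sᵢ(-sᵢ)` as graded `K`-vector spaces, where `Sᵢ`
is a graded algebra retract of `S`, i.e. a polynomial ring in `dd i ≥ k` variables. -/
def HilbertDecomp1 {K : Type} [Field K] {n : ℕ} (I : Ideal (MvPolynomial (Fin n) K))
    (k : ℕ) : Prop :=
  ∃ (ι : Type) (_ : Fintype ι) (dd : ι → ℕ) (s : ι → ℤ),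
    (∀ i, k ≤ dd i) ∧ ∀ j : ℤ, hilbZ I j = ∑ i, polyHilb (dd i) (j - s i)

/-- The Hilbert depth of `I` in the standard graded sense. -/
def hdepth1 {K : Type} [Field K] {n : ℕ} (I : Ideal (MvPolynomial (Fin n) K)) : ℕ∞ :=
  sSup {k : ℕ∞ | ∃ m : ℕ, HilbertDecomp1 I m ∧ k = m}

/-- The set of exponent vectors `u + ℕ^Z`, corresponding to the Stanley space `x^u K[Z]`. -/
def cone {n : ℕ} (u : Fin n →₀ ℕ) (Z : Finset (Fin n)) : Set (Fin n →₀ ℕ) :=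
  {a | (∀ j, u j ≤ a j) ∧ ∀ j ∉ Z, a j = u j}

/-- A Stanley decomposition, with all Stanley spaces of dimension at least `k`, of the
`ℤⁿ`-graded module whose monomial basis has exponent set `A`. -/
def StanleyPartN {n : ℕ} (A : Set (Fin n →₀ ℕ)) (k : ℕ) : Prop :=
  ∃ (ι : Type) (_ : Fintype ι) (u : ι → (Fin n →₀ ℕ)) (Z : ι → Finset (Fin n)),
    (∀ i, k ≤ (Z i).card) ∧ (∀ i, cone (u i) (Z i) ⊆ A) ∧
    (∀ a ∈ A, ∃! i, a ∈ cone (u i) (Z i))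

/-- The multigraded Stanley depth of the `ℤⁿ`-graded module whose monomial basis has
exponent set `A`. -/
def sdepthN {n : ℕ} (A : Set (Fin n →₀ ℕ)) : ℕ∞ :=
  sSup {k : ℕ∞ | ∃ m : ℕ, StanleyPartN A m ∧ k = m}

/-- A multigraded Hilbert decomposition of the monomial ideal `I`, with all retracts
polynomial rings in at least `k` variables: the multigraded Hilbert function of `I`
(which takes values 0 and 1) equals the sum of the multigraded Hilbert functions of
the shifted retracts `x^{u i} K[Z i]`. -/
def HilbertDecompN {K : Type} [Field K] {n : ℕ} (I : Ideal (MvPolynomial (Fin n) K))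
    (k : ℕ) : Prop :=
  ∃ (ι : Type) (_ : Fintype ι) (u : ι → (Fin n →₀ ℕ)) (Z : ι → Finset (Fin n)),
    (∀ i, k ≤ (Z i).card) ∧
    (∀ a : Fin n →₀ ℕ, (a ∈ expSet I ↔ ∃ i, a ∈ cone (u i) (Z i)) ∧
      (∀ i i', a ∈ cone (u i) (Z i) → a ∈ cone (u i') (Z i') → i = i'))

/-- The multigraded Hilbert depth of a monomial ideal `I`. -/
def hdepthN {K : Type} [Field K] {n : ℕ} (I : Ideal (MvPolynomial (Fin n) K)) : ℕ∞ :=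
  sSup {k : ℕ∞ | ∃ m : ℕ, HilbertDecompN I m ∧ k = m}

/-- The graded maximal ideal `(x_1, …, x_n)`. -/
def maxIdeal (K : Type) [Field K] (n : ℕ) : Ideal (MvPolynomial (Fin n) K) :=
  Ideal.span (Set.range X)

/-- The depth of a module `M` over `S = K[x_1,…,x_n]` with respect to the graded maximal
ideal: the supremum of lengths of `M`-regular sequences in `(x_1,…,x_n)`. -/
def mdepth (K : Type) [Field K] (n : ℕ) (M : Type)
    [AddCommGroup M] [Module (MvPolynomial (Fin n) K) M] : ℕ∞ :=
  sSup {k : ℕ∞ | ∃ rs : List (MvPolynomial (Fin n) K),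
    (∀ r ∈ rs, r ∈ maxIdeal K n) ∧ RingTheory.Sequence.IsRegular M rs ∧ k = rs.length}

/-- The quotient module `I/J` for ideals `J ≤ I`. -/
def quotMod {K : Type} [Field K] {n : ℕ} (I J : Ideal (MvPolynomial (Fin n) K)) : Type :=
  ↥I ⧸ (Submodule.comap (Submodule.subtype I) J)

instance {K : Type} [Field K] {n : ℕ} (I J : Ideal (MvPolynomial (Fin n) K)) :
    AddCommGroup (quotMod I J) := by unfold quotMod; infer_instance

instance {K : Type} [Field K] {n : ℕ} (I J : Ideal (MvPolynomial (Fin n) K)) :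
    Module (MvPolynomial (Fin n) K) (quotMod I J) := by unfold quotMod; infer_instance

/-- `ρ_j(I\J)`: the number of squarefree monomials of degree `j` in `I ∖ J`. -/
def rho {K : Type} [Field K] {n : ℕ} (I J : Ideal (MvPolynomial (Fin n) K)) (j : ℕ) : ℕ :=
  Set.ncard {a : Fin n →₀ ℕ | IsSqfree a ∧ edeg a = j ∧ a ∈ expSet I ∧ a ∉ expSet J}

/-- `ρ_j(I)`: the number of squarefree monomials of degree `j` in `I`. -/
def rhoI {K : Type} [Field K] {n : ℕ} (I : Ideal (MvPolynomial (Fin n) K)) (j : ℕ) : ℕ :=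
  Set.ncard {a : Fin n →₀ ℕ | IsSqfree a ∧ edeg a = j ∧ a ∈ expSet I}

/-- `I` is a stable monomial ideal. Here `j` plays the role of `m(u)`, the largest index of
a variable dividing `u = x^a`. -/
def IsStable {K : Type} [Field K] {n : ℕ} (I : Ideal (MvPolynomial (Fin n) K)) : Prop :=
  IsMonomialIdeal I ∧ ∀ a : Fin n →₀ ℕ, (monomial a (1 : K)) ∈ I →
    ∀ j : Fin n, a j ≠ 0 → (∀ l, j < l → a l = 0) → ∀ i, i < j →
      (monomial (a + Finsupp.single i 1 - Finsupp.single j 1) (1 : K)) ∈ I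

/-- `I` is a squarefree stable monomial ideal. -/
def IsSqfreeStable {K : Type} [Field K] {n : ℕ} (I : Ideal (MvPolynomial (Fin n) K)) : Prop :=
  IsSqfreeMonomialIdeal I ∧ ∀ a : Fin n →₀ ℕ, IsSqfree a → (monomial a (1 : K)) ∈ I →
    ∀ j : Fin n, a j ≠ 0 → (∀ l, j < l → a l = 0) → ∀ i, i < j → a i = 0 →
      (monomial (a + Finsupp.single i 1 - Finsupp.single j 1) (1 : K)) ∈ I

/-- `I` is a squarefree strongly stable monomial ideal. -/
def IsSqfreeStronglyStable {K : Type} [Field K] {n : ℕ}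
    (I : Ideal (MvPolynomial (Fin n) K)) : Prop :=
  IsSqfreeMonomialIdeal I ∧ ∀ a : Fin n →₀ ℕ, IsSqfree a → (monomial a (1 : K)) ∈ I →
    ∀ i : Fin n, a i ≠ 0 → ∀ j, j < i → a j = 0 →
      (monomial (a + Finsupp.single j 1 - Finsupp.single i 1) (1 : K)) ∈ I

/-- The exponent vectors of the minimal monomial generators of a monomial ideal:
the monomials of `I` minimal with respect to divisibility. -/
def minGens {K : Type} [Field K] {n : ℕ} (I : Ideal (MvPolynomial (Fin n) K)) :
    Set (Fin n →₀ ℕ) := {a | a ∈ expSet I ∧ ∀ b ∈ expSet I, b ≤ a → b = a}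

/-- `m(u)`: the largest index (1-based) of a variable dividing `x^a`; `0` if `a = 0`. -/
def mvar {n : ℕ} (a : Fin n →₀ ℕ) : ℕ := a.support.sup (fun i => (i : ℕ) + 1)

/-- `m(I) = max { m(u) : u ∈ G(I) }`. -/
def mIdeal {K : Type} [Field K] {n : ℕ} (I : Ideal (MvPolynomial (Fin n) K)) : ℕ :=
  sSup {m | ∃ a ∈ minGens I, m = mvar a}

open MvPolynomial

/-- The `K`-subspace `Aᵢ·xᵢ` of `S`, where `Aᵢ` is the subalgebra generated by `B`. -/
def stSpace {K : Type} [Field K] {n : ℕ} (B : Finset (MvPolynomial (Fin n) K))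
    (x : MvPolynomial (Fin n) K) : Submodule K (MvPolynomial (Fin n) K) :=
  (Subalgebra.toSubmodule (Algebra.adjoin K (B : Set (MvPolynomial (Fin n) K)))).map
    (LinearMap.mulLeft K x)

/-- A standard graded Stanley decomposition of the ideal `I` with all Stanley spaces of
depth at least `k`: a finite family of graded algebra retracts `Sᵢ = K[Bᵢ]` (generated by
`k ≤ |Bᵢ|` linearly independent linear forms) and homogeneous elements `xᵢ ∈ I` with
`Sᵢ ∩ ann(xᵢ) = 0`, such that `I = ⊕ᵢ Sᵢ xᵢ` as graded `K`-vector spaces. -/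
def StanleyDecomp1 {K : Type} [Field K] {n : ℕ} (I : Ideal (MvPolynomial (Fin n) K))
    (k : ℕ) : Prop :=
  ∃ (ι : Type) (_ : Fintype ι) (B : ι → Finset (MvPolynomial (Fin n) K))
    (x : ι → MvPolynomial (Fin n) K) (d : ι → ℕ),
      (∀ i, ∀ b ∈ B i, b ∈ homogeneousSubmodule (Fin n) K 1) ∧
      (∀ i, LinearIndependent K (fun b : (B i : Set (MvPolynomial (Fin n) K)) =>
        (b : MvPolynomial (Fin n) K))) ∧
      (∀ i, k ≤ (B i).card) ∧
      (∀ i, x i ∈ I) ∧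
      (∀ i, x i ∈ homogeneousSubmodule (Fin n) K (d i)) ∧
      (∀ i, ∀ a ∈ Algebra.adjoin K ((B i : Set (MvPolynomial (Fin n) K))),
        a * x i = 0 → a = 0) ∧
      (iSup (fun i => stSpace (B i) (x i)) = Submodule.restrictScalars K I) ∧
      (iSupIndep fun i => stSpace (B i) (x i))

/-- The standard graded Stanley depth of `I`. -/
def sdepth1 {K : Type} [Field K] {n : ℕ} (I : Ideal (MvPolynomial (Fin n) K)) : ℕ∞ :=
  sSup {k : ℕ∞ | ∃ m : ℕ, StanleyDecomp1 I m ∧ k = m}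

/-- The subspace `S₁ · V` of `S`. -/
def mulS1 {K : Type} [Field K] {n : ℕ} (V : Submodule K (MvPolynomial (Fin n) K)) :
    Submodule K (MvPolynomial (Fin n) K) :=
  Submodule.span K {p | ∃ l ∈ homogeneousSubmodule (Fin n) K 1, ∃ v ∈ V, p = l * v}

/-- A lexsegment set of monomials of degree `d`. -/
def IsLexSet {n : ℕ} (d : ℕ) (L : Set (Fin n →₀ ℕ)) : Prop :=
  (∀ a ∈ L, edeg a = d) ∧ ∀ a ∈ L, ∀ b : Fin n →₀ ℕ, edeg b = d → lexGT b a → b ∈ L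

/-- `V ⊆ S_d` is a Gotzmann space: `dim_K (S₁·V) = dim_K (S₁·lex(V))`, where `lex(V)` is
spanned by the lexsegment set of monomials of degree `d` of cardinality `dim_K V`. -/
def IsGotzmannSpace {K : Type} [Field K] {n : ℕ} (d : ℕ)
    (V : Submodule K (MvPolynomial (Fin n) K)) : Prop :=
  ∃ L : Finset (Fin n →₀ ℕ), IsLexSet (n := n) d (L : Set (Fin n →₀ ℕ)) ∧ L.card = Module.finrank K ↥V ∧
    Module.finrank K ↥(mulS1 V) =
      Module.finrank K ↥(mulS1 (Submodule.span K
        ((fun a => (monomial a (1 : K))) '' (L : Set (Fin n →₀ ℕ)))))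

/-- `I` is a homogeneous ideal in the standard grading. -/
def IsHomogeneousIdeal {K : Type} [Field K] {n : ℕ}
    (I : Ideal (MvPolynomial (Fin n) K)) : Prop :=
  ∀ p ∈ I, ∀ k : ℕ, homogeneousComponent k p ∈ I

/-- `I` is a Gotzmann ideal: each homogeneous component `I_k` is a Gotzmann space. -/
def IsGotzmannIdeal {K : Type} [Field K] {n : ℕ}
    (I : Ideal (MvPolynomial (Fin n) K)) : Prop :=
  IsHomogeneousIdeal I ∧ ∀ k : ℕ,
    IsGotzmannSpace k ((Submodule.restrictScalars K I) ⊓ homogeneousSubmodule (Fin n) K k)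

/-- `I` is generated by homogeneous elements of degree `d`. -/
def GenInDegHomog {K : Type} [Field K] {n : ℕ} (I : Ideal (MvPolynomial (Fin n) K))
    (d : ℕ) : Prop :=
  ∃ G : Set (MvPolynomial (Fin n) K), (∀ g ∈ G, g ∈ homogeneousSubmodule (Fin n) K d) ∧
    I = Ideal.span G

/-! Since `I` is generated in degree `d`, `I_{j+1} = S₁ · I_j` for `j ≥ d` and `dim I_d = μ(I)`.
The Gotzmann property gives `dim S₁ · I_j = dim S₁ · lex(I_j)`, and multiplication by
`x₁^(d-d')` carries the lexsegment of degree `d' + δ` onto the lexsegment of degree `d + δ` of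
the same size without changing the dimension of its `S₁`-multiple. Induction on `δ` then gives
`H(I, d + δ) = H(I', d' + δ)`, hence the Hilbert series identity; and shifting every summand by
`d - d'` turns the Hilbert decompositions of `I'` into those of `I` and back. -/

attribute [local instance] MvPolynomial.gradedAlgebra

theorem MvPolynomial.homogeneousComponent_mul_of_mem_right {σ R : Type*} [CommSemiring R]
    {d : ℕ} (j : ℕ) (f : MvPolynomial σ R) {g : MvPolynomial σ R}
    (hg : g ∈ homogeneousSubmodule σ R d) :
    homogeneousComponent j (f * g) = if d ≤ j then homogeneousComponent (j - d) f * g else 0 := by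
  simpa only [DirectSum.decompose, Equiv.coe_fn_mk, decomposition.decompose'_apply] using
    DirectSum.coe_decompose_mul_of_right_mem (homogeneousSubmodule σ R) j (a := f) hg

section Graded

variable {K : Type} [Field K] {n : ℕ}

instance (j : ℕ) : FiniteDimensional K (homogeneousSubmodule (Fin n) K j) :=
  Module.Finite.iff_fg.mpr (homogeneousSubmodule_fg _ _ j)

def homogPart (I : Ideal (MvPolynomial (Fin n) K)) (j : ℕ) :
    Submodule K (MvPolynomial (Fin n) K) :=
  Submodule.restrictScalars K I ⊓ homogeneousSubmodule (Fin n) K j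

instance (I : Ideal (MvPolynomial (Fin n) K)) (j : ℕ) : FiniteDimensional K (homogPart I j) :=
  Submodule.finiteDimensional_of_le inf_le_right

theorem hilb_eq_finrank_homogPart (I : Ideal (MvPolynomial (Fin n) K)) (j : ℕ) :
    hilb I j = Module.finrank K (homogPart I j) := rfl

theorem mulS1_eq_mul (V : Submodule K (MvPolynomial (Fin n) K)) :
    mulS1 V = homogeneousSubmodule (Fin n) K 1 * V := by
  rw [Submodule.mul_eq_span_mul_set, mulS1]
  congr 1
  ext p
  simp only [Set.mem_ofPred_eq, Set.mem_mul, SetLike.mem_coe, eq_comm]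

theorem mulS1_eq_bot_of_eq_zero (hn : n = 0) (V : Submodule K (MvPolynomial (Fin n) K)) :
    mulS1 V = ⊥ := by
  subst hn
  rw [mulS1_eq_mul, homogeneousSubmodule_one_eq_span_X, Set.range_eq_empty, Submodule.span_empty,
    Submodule.bot_mul]

variable {G : Set (MvPolynomial (Fin n) K)} {d : ℕ}

theorem homogeneousComponent_mem_of_mem_span
    (hG : ∀ g ∈ G, g ∈ homogeneousSubmodule (Fin n) K d) {p : MvPolynomial (Fin n) K}
    (hp : p ∈ Ideal.span G) (j : ℕ) :
    homogeneousComponent j p ∈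
      if d ≤ j then homogeneousSubmodule (Fin n) K (j - d) * Submodule.span K G else ⊥ := by
  obtain ⟨m, f, g, rfl⟩ := Submodule.mem_span_set'.mp hp
  rw [map_sum]
  refine Submodule.sum_mem _ fun i _ => ?_
  rw [smul_eq_mul, homogeneousComponent_mul_of_mem_right _ _ (hG _ (g i).2)]
  split_ifs
  · exact Submodule.mul_mem_mul (homogeneousComponent_mem _ _) (Submodule.subset_span (g i).2)
  · exact zero_mem _

theorem homogPart_span_of_lt (hG : ∀ g ∈ G, g ∈ homogeneousSubmodule (Fin n) K d) {j : ℕ}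
    (hj : j < d) : homogPart (Ideal.span G) j = ⊥ := by
  refine eq_bot_iff.mpr fun p ⟨hpI, hpj⟩ => ?_
  have h := homogeneousComponent_mem_of_mem_span hG hpI j
  rwa [if_neg (not_le.mpr hj), homogeneousComponent_of_mem hpj, if_pos rfl] at h

theorem homogPart_span_add (hG : ∀ g ∈ G, g ∈ homogeneousSubmodule (Fin n) K d) (e : ℕ) :
    homogPart (Ideal.span G) (e + d) = homogeneousSubmodule (Fin n) K e * Submodule.span K G := by
  apply le_antisymm
  · rintro p ⟨hpI, hpj⟩
    have h := homogeneousComponent_mem_of_mem_span hG hpI (e + d)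
    rwa [if_pos (Nat.le_add_left d e), Nat.add_sub_cancel, homogeneousComponent_of_mem hpj,
      if_pos rfl] at h
  · refine Submodule.mul_le.mpr fun q hq w hw => ⟨?_, ?_⟩
    · exact Ideal.mul_mem_left _ q (Submodule.span_le_restrictScalars K _ G hw)
    · exact IsHomogeneous.mul hq (Submodule.span_le.mpr hG hw)

theorem homogPart_span_self (hG : ∀ g ∈ G, g ∈ homogeneousSubmodule (Fin n) K d) :
    homogPart (Ideal.span G) d = Submodule.span K G := by
  simpa [homogeneousSubmodule_zero] using homogPart_span_add hG 0

theorem homogPart_span_succ (hG : ∀ g ∈ G, g ∈ homogeneousSubmodule (Fin n) K d) {j : ℕ}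
    (hj : d ≤ j) : homogPart (Ideal.span G) (j + 1) = mulS1 (homogPart (Ideal.span G) j) := by
  obtain ⟨e, rfl⟩ := Nat.exists_eq_add_of_le' hj
  rw [mulS1_eq_mul, add_right_comm, homogPart_span_add hG, homogPart_span_add hG, ← mul_assoc,
    ← homogeneousSubmodule_one_pow (σ := Fin n) (R := K) (e + 1), pow_succ',
    homogeneousSubmodule_one_pow]

end Graded

section MinimalGenerators

variable {K : Type} [Field K] {n : ℕ} {G : Set (MvPolynomial (Fin n) K)} {d : ℕ}

theorem homogeneousComponent_mul_of_mem_span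
    (hG : ∀ g ∈ G, g ∈ homogeneousSubmodule (Fin n) K d) {g : MvPolynomial (Fin n) K}
    (hg : g ∈ Ideal.span G) (f : MvPolynomial (Fin n) K) :
    homogeneousComponent d (f * g) = constantCoeff f • homogeneousComponent d g := by
  induction hg using Submodule.span_induction generalizing f with
  | mem x hx =>
    rw [homogeneousComponent_mul_of_mem_right _ _ (hG x hx), if_pos le_rfl, Nat.sub_self,
      homogeneousComponent_zero, homogeneousComponent_of_mem (hG x hx), if_pos rfl, smul_eq_C_mul]
    rfl
  | zero => simp
  | add x y _ _ hx hy => rw [mul_add, map_add, hx, hy, map_add, smul_add]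
  | smul a x _ hx => rw [smul_eq_mul, ← mul_assoc, hx, hx, map_mul, mul_smul]

theorem homogPart_le_span_homogeneousComponent
    (hG : ∀ g ∈ G, g ∈ homogeneousSubmodule (Fin n) K d) {G' : Set (MvPolynomial (Fin n) K)}
    (hGG' : Ideal.span G = Ideal.span G') :
    homogPart (Ideal.span G) d ≤ Submodule.span K (homogeneousComponent d '' G') := by
  rintro p ⟨hpI, hpd⟩
  rw [← (homogeneousComponent_of_mem hpd).trans (if_pos rfl)]
  replace hpI : p ∈ Ideal.span G' := hGG' ▸ hpI
  clear hpd
  induction hpI using Submodule.span_induction with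
  | mem x hx => exact Submodule.subset_span (Set.mem_image_of_mem _ hx)
  | zero => simp
  | add x y _ _ hx hy => rw [map_add]; exact add_mem hx hy
  | smul a x hx' hx =>
    rw [smul_eq_mul, homogeneousComponent_mul_of_mem_span hG (hGG' ▸ hx')]
    exact Submodule.smul_mem _ _ hx

theorem hilb_span_le_card (hG : ∀ g ∈ G, g ∈ homogeneousSubmodule (Fin n) K d)
    (T : Finset (MvPolynomial (Fin n) K)) (hT : Ideal.span G = Ideal.span T) :
    hilb (Ideal.span G) d ≤ T.card := by
  classical
  have hle : homogPart (Ideal.span G) d ≤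
      Submodule.span K (T.image (homogeneousComponent d) : Set _) := by
    rw [Finset.coe_image]
    exact homogPart_le_span_homogeneousComponent hG hT
  calc hilb (Ideal.span G) d ≤ _ := Submodule.finrank_mono hle
    _ ≤ (T.image (homogeneousComponent d)).card := finrank_span_finset_le_card _
    _ ≤ T.card := Finset.card_image_le

theorem mu_le_hilb (hG : ∀ g ∈ G, g ∈ homogeneousSubmodule (Fin n) K d) :
    mu (Ideal.span G) ≤ hilb (Ideal.span G) d := by
  classical
  set V := homogPart (Ideal.span G) d
  set b := Module.finBasis K V
  let T : Finset (MvPolynomial (Fin n) K) := Finset.univ.image fun i => (b i : _)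
  have hVT : V ≤ Submodule.restrictScalars K (Ideal.span (T : Set _)) := by
    calc V = Submodule.span K (V.subtype '' Set.range b) := by
          rw [← Submodule.map_span, b.span_eq, Submodule.map_subtype_top]
      _ ≤ _ := by
          rw [← Set.range_comp, Submodule.span_le]
          rintro _ ⟨i, rfl⟩
          exact Ideal.subset_span (by simp [T])
  have hT : Ideal.span G = Ideal.span (T : Set _) := by
    refine le_antisymm (Ideal.span_le.mpr fun g hg => hVT ?_) (Ideal.span_le.mpr ?_)
    · rw [show V = Submodule.span K G from homogPart_span_self hG]
      exact Submodule.subset_span hg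
    · simp only [T, Finset.coe_image, Finset.coe_univ, Set.image_univ, Set.range_subset_iff]
      exact fun i => (b i).2.1
  calc mu (Ideal.span G) ≤ T.card := Nat.sInf_le ⟨T, rfl, hT⟩
    _ ≤ Finset.univ.card := Finset.card_image_le
    _ = hilb (Ideal.span G) d := by rw [Finset.card_univ, Fintype.card_fin]; rfl

theorem hilb_eq_mu {I : Ideal (MvPolynomial (Fin n) K)} (hI : GenInDegHomog I d) :
    hilb I d = mu I := by
  obtain ⟨G, hG, rfl⟩ := hI
  refine le_antisymm (le_csInf ?_ ?_) (mu_le_hilb hG)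
  · obtain ⟨T, hT⟩ := IsNoetherian.noetherian (Ideal.span G)
    exact ⟨T.card, T, rfl, hT.symm⟩
  · rintro m ⟨T, rfl, hT⟩
    exact hilb_span_le_card hG T hT

end MinimalGenerators

section Lex

variable {n : ℕ}

theorem edeg_add (a b : Fin n →₀ ℕ) : edeg (a + b) = edeg a + edeg b := by
  simp [edeg, Finset.sum_add_distrib]

theorem edeg_single (i : Fin n) (e : ℕ) : edeg (Finsupp.single i e) = e := by
  simp [edeg, Finsupp.single_apply]

theorem lexGT_iff_toLex_lt (a b : Fin n →₀ ℕ) : lexGT a b ↔ toLex ⇑b < toLex ⇑a := by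
  simp only [lexGT, @eq_comm _ (a _)]
  rfl

theorem lexGT_or_lexGT_of_ne {a b : Fin n →₀ ℕ} (hab : a ≠ b) : lexGT a b ∨ lexGT b a := by
  rw [lexGT_iff_toLex_lt, lexGT_iff_toLex_lt]
  exact lt_or_gt_of_ne fun h => hab (DFunLike.coe_injective (toLex.injective h)).symm

theorem lexGT_add_right_iff (a b c : Fin n →₀ ℕ) : lexGT (a + c) (b + c) ↔ lexGT a b := by
  simp [lexGT]

theorem IsLexSet.eq_of_card_eq {d : ℕ} {L₁ L₂ : Finset (Fin n →₀ ℕ)}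
    (h₁ : IsLexSet d (L₁ : Set (Fin n →₀ ℕ))) (h₂ : IsLexSet d (L₂ : Set (Fin n →₀ ℕ)))
    (hc : L₁.card = L₂.card) : L₁ = L₂ := by
  by_contra hne
  obtain ⟨a, ha₁, ha₂⟩ := Finset.not_subset.mp fun h => hne (Finset.eq_of_subset_of_card_le h hc.ge)
  obtain ⟨b, hb₂, hb₁⟩ :=
    Finset.not_subset.mp fun h => hne (Finset.eq_of_subset_of_card_le h hc.le).symm
  rcases lexGT_or_lexGT_of_ne (fun h : a = b => ha₂ (h ▸ hb₂)) with h | h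
  · exact ha₂ (h₂.2 b hb₂ a (h₁.1 a ha₁) h)
  · exact hb₁ (h₁.2 a ha₁ b (h₂.1 b hb₂) h)

theorem IsLexSet.image_add_single_zero [NeZero n] {d : ℕ} {L : Finset (Fin n →₀ ℕ)}
    (hL : IsLexSet d (L : Set (Fin n →₀ ℕ))) (e : ℕ) :
    IsLexSet (d + e) (L.image (· + Finsupp.single 0 e) : Set (Fin n →₀ ℕ)) := by
  classical
  simp only [Finset.coe_image, IsLexSet, Set.forall_mem_image]
  refine ⟨fun a ha => by rw [edeg_add, edeg_single, hL.1 a ha], fun a ha b hb hba => ?_⟩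
  have he : e ≤ b 0 := by
    obtain ⟨i, hi, hlt⟩ := hba
    rcases (Fin.zero_le i).eq_or_lt with rfl | h0
    · simp only [Finsupp.add_apply, Finsupp.single_eq_same] at hlt
      omega
    · simp [hi 0 h0]
  obtain ⟨b, rfl⟩ : ∃ b', b = b' + Finsupp.single 0 e :=
    ⟨b - Finsupp.single 0 e, (tsub_add_cancel_of_le (Finsupp.single_le_iff.mpr he)).symm⟩
  rw [lexGT_add_right_iff] at hba
  rw [edeg_add, edeg_single, Nat.add_right_cancel_iff] at hb
  exact ⟨b, hL.2 a ha b hb hba, rfl⟩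

end Lex

section Shift

variable {K : Type} [Field K] {n : ℕ}

variable (K) in
/-- `lex(V)` when `s` is the lexsegment of size `dim V`. -/
def monomialSpan (s : Set (Fin n →₀ ℕ)) : Submodule K (MvPolynomial (Fin n) K) :=
  Submodule.span K ((fun a => monomial a (1 : K)) '' s)

theorem map_mulLeft_eq_span_singleton_mul (x : MvPolynomial (Fin n) K)
    (V : Submodule K (MvPolynomial (Fin n) K)) :
    V.map (LinearMap.mulLeft K x) = Submodule.span K {x} * V := by
  ext p
  simp [Submodule.mem_span_singleton_mul]

theorem mulS1_map_mulLeft (x : MvPolynomial (Fin n) K) (V : Submodule K (MvPolynomial (Fin n) K)) :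
    mulS1 (V.map (LinearMap.mulLeft K x)) = (mulS1 V).map (LinearMap.mulLeft K x) := by
  simp only [mulS1_eq_mul, map_mulLeft_eq_span_singleton_mul, mul_left_comm]

theorem monomialSpan_image_add (c : Fin n →₀ ℕ) (s : Set (Fin n →₀ ℕ)) :
    monomialSpan K ((· + c) '' s) =
      (monomialSpan K s).map (LinearMap.mulLeft K (monomial c 1)) := by
  rw [monomialSpan, monomialSpan, Submodule.map_span, Set.image_image, Set.image_image]
  simp only [LinearMap.mulLeft_apply, monomial_mul, one_mul, add_comm c]

theorem finrank_mulS1_monomialSpan_image_add (c : Fin n →₀ ℕ) (s : Set (Fin n →₀ ℕ)) :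
    Module.finrank K (mulS1 (monomialSpan K ((· + c) '' s))) =
      Module.finrank K (mulS1 (monomialSpan K s)) := by
  have hinj : Function.Injective (LinearMap.mulLeft K (monomial c (1 : K))) :=
    mul_right_injective₀ (monomial_eq_zero.not.mpr one_ne_zero)
  rw [monomialSpan_image_add, mulS1_map_mulLeft]
  exact (Submodule.equivMapOfInjective _ hinj _).finrank_eq.symm

theorem finrank_mulS1_monomialSpan_lex_eq {d d' : ℕ} (hdd : d' ≤ d) {L L' : Finset (Fin n →₀ ℕ)}
    (hL : IsLexSet d (L : Set (Fin n →₀ ℕ))) (hL' : IsLexSet d' (L' : Set (Fin n →₀ ℕ)))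
    (hc : L.card = L'.card) :
    Module.finrank K (mulS1 (monomialSpan K (L : Set (Fin n →₀ ℕ)))) =
      Module.finrank K (mulS1 (monomialSpan K (L' : Set (Fin n →₀ ℕ)))) := by
  classical
  rcases eq_zero_or_neZero n with rfl | _
  · rw [mulS1_eq_bot_of_eq_zero rfl, mulS1_eq_bot_of_eq_zero rfl]
  obtain ⟨e, rfl⟩ := Nat.exists_eq_add_of_le hdd
  have hshift : L'.image (· + Finsupp.single 0 e) = L := by
    refine (hL'.image_add_single_zero e).eq_of_card_eq hL ?_
    rw [Finset.card_image_of_injective _ (add_left_injective _), hc]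
  rw [← hshift, Finset.coe_image, finrank_mulS1_monomialSpan_image_add]

end Shift

section HilbertFunction

variable {K : Type} [Field K] {n : ℕ} {I I' : Ideal (MvPolynomial (Fin n) K)} {d d' : ℕ}

theorem hilb_eq_zero_of_lt (hI : GenInDegHomog I d) {j : ℕ} (hj : j < d) : hilb I j = 0 := by
  obtain ⟨G, hG, rfl⟩ := hI
  rw [hilb_eq_finrank_homogPart, homogPart_span_of_lt hG hj, finrank_bot]

theorem IsGotzmannIdeal.exists_lex_hilb_succ (hG : IsGotzmannIdeal I) (hI : GenInDegHomog I d)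
    {j : ℕ} (hj : d ≤ j) :
    ∃ L : Finset (Fin n →₀ ℕ), IsLexSet j (L : Set (Fin n →₀ ℕ)) ∧ L.card = hilb I j ∧
      hilb I (j + 1) = Module.finrank K (mulS1 (monomialSpan K (L : Set (Fin n →₀ ℕ)))) := by
  obtain ⟨G, hGd, rfl⟩ := hI
  obtain ⟨L, hL, hcard, hrank⟩ := hG.2 j
  refine ⟨L, hL, hcard, ?_⟩
  rw [hilb_eq_finrank_homogPart, homogPart_span_succ hGd hj]
  exact hrank

theorem IsGotzmannIdeal.hilb_add_eq (hG : IsGotzmannIdeal I) (hG' : IsGotzmannIdeal I')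
    (hI : GenInDegHomog I d) (hI' : GenInDegHomog I' d') (hdd : d' ≤ d) (hmu : mu I = mu I')
    (δ : ℕ) : hilb I (d + δ) = hilb I' (d' + δ) := by
  induction δ with
  | zero => rw [Nat.add_zero, Nat.add_zero, hilb_eq_mu hI, hilb_eq_mu hI', hmu]
  | succ δ ih =>
    obtain ⟨L, hL, hLc, hLr⟩ := hG.exists_lex_hilb_succ hI (Nat.le_add_right d δ)
    obtain ⟨L', hL', hL'c, hL'r⟩ := hG'.exists_lex_hilb_succ hI' (Nat.le_add_right d' δ)
    rw [← add_assoc, ← add_assoc, hLr, hL'r]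
    exact finrank_mulS1_monomialSpan_lex_eq (by omega) hL hL' (by rw [hLc, hL'c, ih])

theorem hilb_add_sub_eq (hI : GenInDegHomog I d) (hI' : GenInDegHomog I' d') (hdd : d' ≤ d)
    (h : ∀ δ, hilb I (d + δ) = hilb I' (d' + δ)) (j : ℕ) :
    hilb I (j + (d - d')) = hilb I' j := by
  rcases le_or_gt d' j with hj | hj
  · obtain ⟨δ, rfl⟩ := Nat.exists_eq_add_of_le hj
    rw [← h δ]
    congr 1
    omega
  · rw [hilb_eq_zero_of_lt hI (by omega), hilb_eq_zero_of_lt hI' hj]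

variable {e : ℕ}

theorem hilbertSeries_eq_X_pow_mul (hshift : ∀ j, hilb I (j + e) = hilb I' j)
    (hlow : ∀ j < e, hilb I j = 0) :
    (PowerSeries.mk fun j => hilb I j) =
      (PowerSeries.X : PowerSeries ℕ) ^ e * PowerSeries.mk fun j => hilb I' j := by
  ext j
  rw [PowerSeries.coeff_X_pow_mul', PowerSeries.coeff_mk]
  split_ifs with hj
  · rw [PowerSeries.coeff_mk, ← hshift, Nat.sub_add_cancel hj]
  · exact hlow j (not_le.mp hj)

theorem hilbZ_add_eq (hshift : ∀ j, hilb I (j + e) = hilb I' j)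
    (hlow : ∀ j < e, hilb I j = 0) (j : ℤ) : hilbZ I (j + e) = hilbZ I' j := by
  unfold hilbZ
  by_cases hj : 0 ≤ j
  · rw [if_pos (by omega), if_pos hj, ← hshift]
    congr 1
    omega
  · rw [if_neg hj]
    split_ifs with hje
    · exact hlow _ (by omega)
    · rfl

end HilbertFunction

section HilbertDepth

variable {K : Type} [Field K] {n : ℕ} {I I' : Ideal (MvPolynomial (Fin n) K)}

theorem HilbertDecomp1.of_hilbZ_add {c : ℤ} (h : ∀ j, hilbZ I (j + c) = hilbZ I' j) {m : ℕ}
    (hD : HilbertDecomp1 I m) : HilbertDecomp1 I' m := by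
  obtain ⟨ι, hι, dd, s, hdd, hsum⟩ := hD
  refine ⟨ι, hι, dd, fun i => s i - c, hdd, fun j => ?_⟩
  rw [← h, hsum]
  congr! 2
  ring

theorem hdepth1_eq_of_hilbZ_add (c : ℤ) (h : ∀ j, hilbZ I (j + c) = hilbZ I' j) :
    hdepth1 I = hdepth1 I' := by
  have h' : ∀ j, hilbZ I' (j + -c) = hilbZ I j := fun j => by rw [← h, neg_add_cancel_right]
  have hD : ∀ m, HilbertDecomp1 I m ↔ HilbertDecomp1 I' m := fun m =>
    ⟨.of_hilbZ_add h, .of_hilbZ_add h'⟩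
  simp only [hdepth1, hD]

end HilbertDepth

/-- Corollary on Gotzmann ideals. Suppose `I` and `I'` are Gotzmann
homogeneous ideals of `S = K[x_1,…,x_n]`, generated in degrees `d` and `d'` respectively
with `d ≥ d'`, and `μ(I) = μ(I')`. Then `H_I(T) = T^{d−d'} H_{I'}(T)`; equivalently
`H(I, d+δ) = H(I', d'+δ)` for all `δ ≥ 0`; and `hdepth_1(I) = hdepth_1(I')`. -/
theorem gotzmann_hilbert_shift {K : Type} [Field K] {n d d' : ℕ}
    (I I' : Ideal (MvPolynomial (Fin n) K))
    (hG : IsGotzmannIdeal I) (hG' : IsGotzmannIdeal I')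
    (hgen : GenInDegHomog I d) (hgen' : GenInDegHomog I' d') (hdd : d' ≤ d)
    (hmu : mu I = mu I') :
    ((PowerSeries.mk fun j => (hilb I j)) =
      (PowerSeries.X : PowerSeries ℕ) ^ (d - d') * PowerSeries.mk fun j => hilb I' j) ∧
    (∀ δ : ℕ, hilb I (d + δ) = hilb I' (d' + δ)) ∧
    hdepth1 I = hdepth1 I' := by
  have hdelta := hG.hilb_add_eq hG' hgen hgen' hdd hmu
  have hshift := hilb_add_sub_eq hgen hgen' hdd hdelta
  have hlow : ∀ j < d - d', hilb I j = 0 := fun j hj => hilb_eq_zero_of_lt hgen (by omega)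
  exact ⟨hilbertSeries_eq_X_pow_mul hshift hlow, hdelta,
    hdepth1_eq_of_hilbZ_add _ (hilbZ_add_eq hshift hlow)⟩
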